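/- Let V > 0 and V_max ≥ V be reals, set d = (V_max − V)/V_max, and assume d ≤ d_max. If the investment I ∈ ℝ satisfies −((d_max − d)/((1 − d)·X_max))·V ≤ I ≤ ((d_max − d)/((1 − d)·|X_min|))·V, then for every return x ∈ [X_min, X_max], setting V' = V + I·x and V_max' = max(V_max, V'), the updated drawdown d' = (V_max' − V')/V_max' satisfies d' ≤ d_max. -/

import Mathlib

/-!
Writing `V = (1 - d) V_max`, both bounds on `I` say `I x ≥ -(d_max - d) V_max` for every admissible
return `x`, i.e. `V' ≥ (1 - d_max) V_max`. If `V'` stays below the old peak this is exactly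
`d' ≤ d_max`; otherwise `V'` is the new peak and `d' = 0`.
-/

noncomputable section

def drawdown (V Vmax : ℝ) : ℝ := (Vmax - V) / Vmax

lemma drawdown_nonneg {V Vmax : ℝ} (hVmax : 0 ≤ Vmax) (h : V ≤ Vmax) : 0 ≤ drawdown V Vmax :=
  div_nonneg (sub_nonneg.mpr h) hVmax

lemma one_sub_drawdown_mul {V Vmax : ℝ} (hVmax : Vmax ≠ 0) : (1 - drawdown V Vmax) * Vmax = V := by
  unfold drawdown
  field_simp
  ring

lemma drawdown_max_le {V' Vmax δ : ℝ} (hVmax : 0 < Vmax) (hδ : 0 ≤ δ)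
    (hV' : (1 - δ) * Vmax ≤ V') : drawdown V' (max Vmax V') ≤ δ := by
  unfold drawdown
  rcases le_total V' Vmax with h | h
  · rw [max_eq_left h, div_le_iff₀ hVmax]
    linarith
  · rwa [max_eq_right h, sub_self, zero_div]

lemma neg_le_mul_of_mem_Icc {a b B I x : ℝ} (hB : 0 ≤ B) (hlo : -(B / b) ≤ I)
    (hhi : I ≤ B / |a|) (hx : x ∈ Set.Icc a b) : -B ≤ I * x := by
  rcases le_total 0 I with hI | hI
  · have hax : I * a ≤ I * x := mul_le_mul_of_nonneg_left hx.1 hI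
    rcases le_or_gt 0 a with ha | ha
    · linarith [mul_nonneg hI ha]
    · have : I * |a| ≤ B := (le_div_iff₀ (abs_pos.mpr ha.ne)).mp hhi
      rw [abs_of_neg ha] at this
      linarith
  · have hbx : I * b ≤ I * x := mul_le_mul_of_nonpos_left hx.2 hI
    rcases le_or_gt b 0 with hb | hb
    · linarith [mul_nonneg_of_nonpos_of_nonpos hI hb]
    · have : -I * b ≤ B := (le_div_iff₀ hb).mp (by linarith)
      linarith

lemma div_mul_mul_cancel_left (a b c : ℝ) {k : ℝ} (hk : k ≠ 0) :
    a / (k * b) * (k * c) = a * c / b := by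
  rw [div_mul_eq_mul_div, mul_left_comm, mul_div_mul_left _ _ hk]

end

theorem one_step_drawdown_sufficiency_general
    (Xmin Xmax dmax V Vm I : ℝ)
    (hV : 0 < V) (hVm : V ≤ Vm)
    (d : ℝ) (hd_def : d = (Vm - V) / Vm)
    (hd : d ≤ dmax)
    (hIlo : -((dmax - d) / ((1 - d) * Xmax)) * V ≤ I)
    (hIhi : I ≤ ((dmax - d) / ((1 - d) * |Xmin|)) * V) :
    ∀ x : ℝ, Xmin ≤ x → x ≤ Xmax →
      (max Vm (V + I * x) - (V + I * x)) / max Vm (V + I * x) ≤ dmax := by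
  intro x hx1 hx2
  have hVm0 : 0 < Vm := hV.trans_le hVm
  have hVeq : (1 - d) * Vm = V := hd_def ▸ one_sub_drawdown_mul hVm0.ne'
  have h1d : 1 - d ≠ 0 := left_ne_zero_of_mul (hVeq ▸ hV.ne')
  have hd0 : 0 ≤ d := hd_def ▸ drawdown_nonneg hVm0.le hVm
  rw [← hVeq, neg_mul, div_mul_mul_cancel_left _ _ _ h1d] at hIlo
  rw [← hVeq, div_mul_mul_cancel_left _ _ _ h1d] at hIhi
  have hIx : -((dmax - d) * Vm) ≤ I * x :=
    neg_le_mul_of_mem_Icc (mul_nonneg (sub_nonneg.mpr hd) hVm0.le) hIlo hIhi ⟨hx1, hx2⟩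
  exact drawdown_max_le hVm0 (hd0.trans hd) (by linarith)

theorem one_step_drawdown_sufficiency
    (Xmin Xmax dmax V Vm I : ℝ)
    (hXmin1 : -1 < Xmin) (hXmin0 : Xmin < 0) (hXmax : 0 < Xmax)
    (hdmax0 : 0 < dmax) (hdmax1 : dmax < 1)
    (hV : 0 < V) (hVm : V ≤ Vm)
    (d : ℝ) (hd_def : d = (Vm - V) / Vm)
    (hd : d ≤ dmax)
    (hIlo : -((dmax - d) / ((1 - d) * Xmax)) * V ≤ I)
    (hIhi : I ≤ ((dmax - d) / ((1 - d) * |Xmin|)) * V) :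
    ∀ x : ℝ, Xmin ≤ x → x ≤ Xmax →
      (max Vm (V + I * x) - (V + I * x)) / max Vm (V + I * x) ≤ dmax :=
  one_step_drawdown_sufficiency_general Xmin Xmax dmax V Vm I hV hVm d hd_def hd hIlo hIhi
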